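/- arXiv:math/0103052 — 2 statements merged into one kernel-verified Lean document; each statement's English description precedes it below -/
import Mathlib

section
/- Let p, q, h be as above (deg p = deg q = 0, deg h = 1, d(h) = p − q), and define the symmetrization ⟨h⟩ := (1/m!) Σ_{σ ∈ Σ_m} ⟨h⟩_ns · σ over the symmetric group Σ_m acting by permuting tensor factors with Koszul signs. Then ⟨h⟩ is Σ_m-equivariant and d(⟨h⟩) = p^{⊗m} − q^{⊗m}. -/
/-!
The `s`-th summand `p^{⊗s} ⊗ h ⊗ q^{⊗(m-s-1)}` of `⟨h⟩_ns` has differential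
`p^{⊗(s+1)} ⊗ q^{⊗(m-s-1)} - p^{⊗s} ⊗ q^{⊗(m-s)}`, since `d` kills every factor but `h`;
so `d⟨h⟩_ns` telescopes to `p^{⊗m} - q^{⊗m}`. Permuting tensor factors commutes with the
Leibniz differential and fixes `p^{⊗m}` and `q^{⊗m}`, so each of the `m!` summands of the average
has the same differential. Invariance of the average is a reindexing of the sum over `Σ_m`.
-/

open scoped TensorProduct

/-- The differential on the `m`-th tensor power of `(M, d)` given by the Leibniz rule. -/
noncomputable def dPow (k M : Type*) [Field k] [AddCommGroup M] [Module k M]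
    (m : ℕ) (d : M →ₗ[k] M) :
    (⨂[k] _ : Fin m, M) →ₗ[k] ⨂[k] _ : Fin m, M :=
  ∑ i : Fin m,
    PiTensorProduct.map (Function.update (fun _ : Fin m => (LinearMap.id : M →ₗ[k] M)) i d)

/-- The action of a permutation `σ ∈ Σ_m` on the `m`-th tensor power, permuting the tensor
factors.  (For the elements considered here, at most one tensor factor is odd, so all
Koszul signs are `+1`.) -/
noncomputable def permAction (k M : Type*) [Field k] [AddCommGroup M] [Module k M]
    (m : ℕ) (σ : Equiv.Perm (Fin m)) :
    (⨂[k] _ : Fin m, M) →ₗ[k] ⨂[k] _ : Fin m, M :=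
  (PiTensorProduct.reindex k (fun _ : Fin m => M) σ).toLinearMap

/-- The element `⟨h⟩_ns = Σ_{s=0}^{m−1} p^{⊗s} ⊗ h ⊗ q^{⊗(m−s−1)}`. -/
noncomputable def hNS (k M : Type*) [Field k] [AddCommGroup M] [Module k M]
    (m : ℕ) (p q h : M) : ⨂[k] _ : Fin m, M :=
  ∑ s ∈ Finset.range m,
    PiTensorProduct.tprod k
      (fun i : Fin m => if i.val < s then p else if i.val = s then h else q)

/-- The symmetrization `⟨h⟩ = (1/m!) Σ_{σ ∈ Σ_m} ⟨h⟩_ns · σ`. -/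
noncomputable def hSym (k M : Type*) [Field k] [AddCommGroup M] [Module k M]
    (m : ℕ) (p q h : M) : ⨂[k] _ : Fin m, M :=
  (m.factorial : k)⁻¹ • ∑ σ : Equiv.Perm (Fin m), permAction k M m σ (hNS k M m p q h)

open PiTensorProduct

/-- `p^{⊗t} ⊗ q^{⊗(m-t)}`, which is `p^{⊗m}` once `t ≥ m`. -/
noncomputable def prefixTensor (k M : Type*) [Field k] [AddCommGroup M] [Module k M]
    (m : ℕ) (p q : M) (t : ℕ) : ⨂[k] _ : Fin m, M :=
  tprod k fun i : Fin m => if i.val < t then p else q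

section

variable {k M : Type*} [Field k] [AddCommGroup M] [Module k M] {m : ℕ}

theorem permAction_tprod (σ : Equiv.Perm (Fin m)) (f : Fin m → M) :
    permAction k M m σ (tprod k f) = tprod k (f ∘ σ.symm) :=
  reindex_tprod σ f

theorem permAction_tprod_const (σ : Equiv.Perm (Fin m)) (p : M) :
    permAction k M m σ (tprod k fun _ => p) = tprod k fun _ => p :=
  permAction_tprod σ _

theorem permAction_permAction (σ τ : Equiv.Perm (Fin m)) (x : ⨂[k] _ : Fin m, M) :
    permAction k M m σ (permAction k M m τ x) = permAction k M m (σ * τ) x :=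
  reindex_reindex τ σ x

theorem permAction_sum_permAction (σ : Equiv.Perm (Fin m)) (x : ⨂[k] _ : Fin m, M) :
    permAction k M m σ (∑ τ, permAction k M m τ x) = ∑ τ, permAction k M m τ x := by
  rw [map_sum]
  exact Fintype.sum_equiv (Equiv.mulLeft σ) _ _ fun τ => permAction_permAction σ τ x

theorem permAction_dPow (d : M →ₗ[k] M) (σ : Equiv.Perm (Fin m)) (x : ⨂[k] _ : Fin m, M) :
    permAction k M m σ (dPow k M m d x) = dPow k M m d (permAction k M m σ x) := by
  simp only [dPow, permAction, LinearMap.sum_apply, map_sum, LinearEquiv.coe_coe,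
    ← map_reindex]
  refine Fintype.sum_equiv σ _ _ fun i => ?_
  congr 2
  exact Function.update_comp_equiv _ σ.symm i d

theorem dPow_tprod (d : M →ₗ[k] M) (f : Fin m → M) :
    dPow k M m d (tprod k f) = ∑ i, tprod k (Function.update f i (d (f i))) := by
  simp only [dPow, LinearMap.sum_apply, map_tprod]
  refine Finset.sum_congr rfl fun i _ => congrArg _ (funext fun j => ?_)
  rcases eq_or_ne j i with rfl | hji
  · simp
  · simp [Function.update_of_ne hji]

theorem dPow_tprod_of_forall_ne (d : M →ₗ[k] M) (f : Fin m → M) (i : Fin m)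
    (hf : ∀ j ≠ i, d (f j) = 0) :
    dPow k M m d (tprod k f) = tprod k (Function.update f i (d (f i))) := by
  rw [dPow_tprod, Finset.sum_eq_single i]
  · exact fun j _ hj => MultilinearMap.map_coord_zero _ j (by simp [hf j hj])
  · simp

theorem dPow_hNS_term (d : M →ₗ[k] M) {p q h : M} (hp : d p = 0) (hq : d q = 0)
    (hh : d h = p - q) {s : ℕ} (hs : s < m) :
    dPow k M m d (tprod k fun i : Fin m => if i.val < s then p else if i.val = s then h else q)
      = prefixTensor k M m p q (s + 1) - prefixTensor k M m p q s := by
  set g : Fin m → M := fun i => if i.val < s then p else q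
  set i₀ : Fin m := ⟨s, hs⟩
  have hterm : (fun i : Fin m => if i.val < s then p else if i.val = s then h else q)
      = Function.update g i₀ h := by
    funext i
    rcases eq_or_ne i i₀ with rfl | hi
    · simp [g, i₀]
    · have : i.val ≠ s := fun h' => hi (Fin.ext h')
      simp [g, Function.update_of_ne hi, this]
  have hsucc : prefixTensor k M m p q (s + 1) = tprod k (Function.update g i₀ p) := by
    refine congrArg _ (funext fun i => ?_)
    rcases eq_or_ne i i₀ with rfl | hi
    · simp [i₀]
    · have : i.val ≠ s := fun h' => hi (Fin.ext h')
      simp only [g, Function.update_of_ne hi]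
      congr 1
      exact propext (by omega)
  have hself : prefixTensor k M m p q s = tprod k (Function.update g i₀ q) := by
    rw [Function.update_eq_self_iff.mpr (by simp [g, i₀])]
    rfl
  rw [hterm, dPow_tprod_of_forall_ne d _ i₀, Function.update_self, hh,
    Function.update_idem, MultilinearMap.map_update_sub, hsucc, hself]
  intro j hj
  simp only [Function.update_of_ne hj, g]
  split_ifs <;> assumption

theorem dPow_hNS (d : M →ₗ[k] M) {p q h : M} (hp : d p = 0) (hq : d q = 0)
    (hh : d h = p - q) :
    dPow k M m d (hNS k M m p q h)
      = tprod k (fun _ : Fin m => p) - tprod k (fun _ : Fin m => q) := by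
  calc dPow k M m d (hNS k M m p q h)
      = ∑ s ∈ Finset.range m, (prefixTensor k M m p q (s + 1) - prefixTensor k M m p q s) := by
        rw [hNS, map_sum]
        exact Finset.sum_congr rfl fun s hs =>
          dPow_hNS_term d hp hq hh (Finset.mem_range.mp hs)
    _ = prefixTensor k M m p q m - prefixTensor k M m p q 0 := Finset.sum_range_sub _ m
    _ = tprod k (fun _ : Fin m => p) - tprod k (fun _ : Fin m => q) := by
        simp [prefixTensor]

end

theorem inv_factorial_smul_sum_perm_const {k V : Type*} [Field k] [CharZero k] [AddCommGroup V]
    [Module k V] (m : ℕ) (x : V) :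
    (m.factorial : k)⁻¹ • ∑ _σ : Equiv.Perm (Fin m), x = x := by
  have hfac : (m.factorial : k) ≠ 0 := Nat.cast_ne_zero.mpr m.factorial_ne_zero
  rw [Finset.sum_const, Finset.card_univ, Fintype.card_perm, Fintype.card_fin,
    ← Nat.cast_smul_eq_nsmul k, smul_smul, inv_mul_cancel₀ hfac, one_smul]

theorem stmt_8_general (k M : Type*) [Field k] [CharZero k] [AddCommGroup M] [Module k M]
    (m : ℕ)
    (d : M →ₗ[k] M)
    (p q h : M) (hp : d p = 0) (hq : d q = 0) (hh : d h = p - q) :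
    (∀ σ : Equiv.Perm (Fin m), permAction k M m σ (hSym k M m p q h) = hSym k M m p q h) ∧
    dPow k M m d (hSym k M m p q h)
      = PiTensorProduct.tprod k (fun _ : Fin m => p)
        - PiTensorProduct.tprod k (fun _ : Fin m => q) := by
  refine ⟨fun σ => by rw [hSym, map_smul, permAction_sum_permAction], ?_⟩
  have hterm (σ : Equiv.Perm (Fin m)) :
      dPow k M m d (permAction k M m σ (hNS k M m p q h))
        = tprod k (fun _ : Fin m => p) - tprod k (fun _ : Fin m => q) := by
    rw [← permAction_dPow, dPow_hNS d hp hq hh, map_sub, permAction_tprod_const,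
      permAction_tprod_const]
  rw [hSym, map_smul, map_sum, Finset.sum_congr rfl fun σ _ => hterm σ,
    inv_factorial_smul_sum_perm_const]

/-- With `deg p = deg q = 0`, `deg h = 1` and `d(h) = p − q`
(`d(p) = d(q) = 0`), the symmetrization `⟨h⟩ = (1/m!) Σ_{σ∈Σ_m} ⟨h⟩_ns·σ` is
`Σ_m`-equivariant (i.e. invariant under the permutation action, all Koszul signs being
`+1` here) and satisfies `d(⟨h⟩) = p^{⊗m} − q^{⊗m}`. -/
theorem stmt_8 (k M : Type*) [Field k] [CharZero k] [AddCommGroup M] [Module k M]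
    (m : ℕ) (hm : 1 ≤ m)
    (d : M →ₗ[k] M) (hd : d ∘ₗ d = 0)
    (p q h : M) (hp : d p = 0) (hq : d q = 0) (hh : d h = p - q) :
    (∀ σ : Equiv.Perm (Fin m), permAction k M m σ (hSym k M m p q h) = hSym k M m p q h) ∧
    dPow k M m d (hSym k M m p q h)
      = PiTensorProduct.tprod k (fun _ : Fin m => p)
        - PiTensorProduct.tprod k (fun _ : Fin m => q) :=
  stmt_8_general k M m d p q h hp hq hh
end

section
/- For all m ≥ 0, the differential defined on generators f_k, g_k (deg f_k = deg g_k = k) by df_{2m} = Σ_{0≤i<m}(f_{2i} f_{2(m−i)−1} − g_{2(m−i)−1} f_{2i}), df_{2m+1} = Σ_{0≤j≤m} g_{2j} f_{2(m−j)} − Σ_{0≤j<m} f_{2j+1} f_{2(m−j)−1} − δ_{m,0}·1, and symmetrically for g, satisfies d² = 0 on every generator. -/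
open Finset

section Reindex
variable {A : Type*} [AddCommMonoid A] (m : ℕ) (X : ℕ → ℕ → ℕ → A)

lemma E1gen :
    ∑ i ∈ range m, ∑ a ∈ range i, X a (i-1-a) (m-1-i)
      = ∑ i ∈ range m, ∑ a ∈ range (m-1-i), X i a (m-1-i-1-a) := by
  rw [Finset.sum_sigma', Finset.sum_sigma']
  refine Finset.sum_nbij' (fun p => ⟨p.2, p.1 - 1 - p.2⟩) (fun p => ⟨p.1 + p.2 + 1, p.1⟩)
    ?_ ?_ ?_ ?_ ?_ <;>
    rintro ⟨x, y⟩ h <;> simp only [Finset.mem_sigma, Finset.mem_range] at h ⊢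
  · omega
  · omega
  · refine Sigma.ext ?_ (heq_of_eq ?_) <;> dsimp <;> omega
  · refine Sigma.ext ?_ (heq_of_eq ?_) <;> dsimp <;> omega
  · congr 1 ; omega

lemma E2gen :
    ∑ i ∈ range m, ∑ a ∈ range (m-1-i+1), X i a (m-1-i-a)
      = ∑ i ∈ range m, ∑ a ∈ range (m-1-i+1), X a (m-1-i-a) i := by
  rw [Finset.sum_sigma', Finset.sum_sigma']
  refine Finset.sum_nbij' (fun p => ⟨m - 1 - p.1 - p.2, p.1⟩) (fun p => ⟨p.2, m - 1 - p.1 - p.2⟩)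
    ?_ ?_ ?_ ?_ ?_ <;>
    rintro ⟨x, y⟩ h <;> simp only [Finset.mem_sigma, Finset.mem_range] at h ⊢
  · omega
  · omega
  · refine Sigma.ext ?_ (heq_of_eq ?_) <;> dsimp <;> omega
  · refine Sigma.ext ?_ (heq_of_eq ?_) <;> dsimp <;> omega
  · congr 1 <;> omega

lemma E3gen :
    ∑ i ∈ range m, ∑ a ∈ range (m-1-i), X a (m-1-i-1-a) i
      = ∑ i ∈ range m, ∑ a ∈ range i, X (m-1-i) (i-1-a) a := by
  rw [Finset.sum_sigma', Finset.sum_sigma']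
  refine Finset.sum_nbij' (fun p => ⟨m - 1 - p.2, p.1⟩) (fun p => ⟨p.2, m - 1 - p.1⟩)
    ?_ ?_ ?_ ?_ ?_ <;>
    rintro ⟨x, y⟩ h <;> simp only [Finset.mem_sigma, Finset.mem_range] at h ⊢
  · omega
  · omega
  · refine Sigma.ext ?_ (heq_of_eq ?_) <;> dsimp <;> omega
  · refine Sigma.ext ?_ (heq_of_eq ?_) <;> dsimp <;> omega
  · congr 1 <;> omega

lemma E4gen :
    ∑ i ∈ range m, ∑ a ∈ range i, X (i-1-a) a (m-1-i)
      = ∑ i ∈ range m, ∑ a ∈ range i, X (m-1-i) a (i-1-a) := by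
  rw [Finset.sum_sigma', Finset.sum_sigma']
  refine Finset.sum_nbij' (fun p => ⟨m - p.1 + p.2, p.2⟩) (fun p => ⟨m - p.1 + p.2, p.2⟩)
    ?_ ?_ ?_ ?_ ?_ <;>
    rintro ⟨x, y⟩ h <;> simp only [Finset.mem_sigma, Finset.mem_range] at h ⊢
  · omega
  · omega
  · refine Sigma.ext ?_ (heq_of_eq ?_) <;> dsimp <;> omega
  · refine Sigma.ext ?_ (heq_of_eq ?_) <;> dsimp <;> omega
  · congr 1 <;> omega

lemma O1gen :
    ∑ j ∈ range (m+1), ∑ a ∈ range j, X a (j-1-a) (m-j)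
      = ∑ j ∈ range (m+1), ∑ a ∈ range (m-j), X j (m-j-1-a) a := by
  rw [Finset.sum_sigma', Finset.sum_sigma']
  refine Finset.sum_nbij' (fun p => ⟨p.2, m - p.1⟩) (fun p => ⟨m - p.2, p.1⟩)
    ?_ ?_ ?_ ?_ ?_ <;>
    rintro ⟨x, y⟩ h <;> simp only [Finset.mem_sigma, Finset.mem_range] at h ⊢
  · omega
  · omega
  · refine Sigma.ext ?_ (heq_of_eq ?_) <;> dsimp <;> omega
  · refine Sigma.ext ?_ (heq_of_eq ?_) <;> dsimp <;> omega
  · congr 1 <;> omega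

lemma O2gen :
    ∑ j ∈ range (m+1), ∑ a ∈ range j, X (j-1-a) a (m-j)
      = ∑ j ∈ range m, ∑ a ∈ range (m-1-j+1), X j a (m-1-j-a) := by
  rw [Finset.sum_sigma', Finset.sum_sigma']
  refine Finset.sum_nbij' (fun p => ⟨p.1 - 1 - p.2, p.2⟩) (fun p => ⟨p.1 + p.2 + 1, p.2⟩)
    ?_ ?_ ?_ ?_ ?_ <;>
    rintro ⟨x, y⟩ h <;> simp only [Finset.mem_sigma, Finset.mem_range] at h ⊢
  · omega
  · omega
  · refine Sigma.ext ?_ (heq_of_eq ?_) <;> dsimp <;> omega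
  · refine Sigma.ext ?_ (heq_of_eq ?_) <;> dsimp <;> omega
  · congr 1 <;> omega

lemma O3gen :
    ∑ j ∈ range (m+1), ∑ a ∈ range (m-j), X j a (m-j-1-a)
      = ∑ j ∈ range m, ∑ a ∈ range (j+1), X a (j-a) (m-1-j) := by
  rw [Finset.sum_sigma', Finset.sum_sigma']
  refine Finset.sum_nbij' (fun p => ⟨p.1 + p.2, p.1⟩) (fun p => ⟨p.2, p.1 - p.2⟩)
    ?_ ?_ ?_ ?_ ?_ <;>
    rintro ⟨x, y⟩ h <;> simp only [Finset.mem_sigma, Finset.mem_range] at h ⊢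
  · omega
  · omega
  · refine Sigma.ext ?_ (heq_of_eq ?_) <;> dsimp <;> omega
  · refine Sigma.ext ?_ (heq_of_eq ?_) <;> dsimp <;> omega
  · congr 1 <;> omega

end Reindex

lemma dl1 {A : Type*} [Ring A] (m : ℕ) (X : ℕ → A) :
    ∑ j ∈ range m, (if j = 0 then (1:A) else 0) * X j
      = if m = 0 then 0 else X 0 := by
  rcases m with _ | k
  · simp
  · rw [Finset.sum_eq_single 0]
    · simp
    · intro b _ hb; simp [hb]
    · simp

lemma dl2 {A : Type*} [Ring A] (m : ℕ) (X : ℕ → A) :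
    ∑ j ∈ range m, X j * (if m-1-j = 0 then (1:A) else 0)
      = if m = 0 then 0 else X (m-1) := by
  rcases m with _ | k
  · simp
  · rw [Finset.sum_eq_single k]
    · simp
    · intro b hb hbk; simp only [Finset.mem_range] at hb
      rw [if_neg (by omega), mul_zero]
    · simp

lemma d2_even {A : Type*} [Ring A] (d : A →+ A) (F P G Q : ℕ → A)
    (LF : ∀ n b, d (F n * b) = d (F n) * b + F n * d b)
    (LQ : ∀ n b, d (Q n * b) = d (Q n) * b - Q n * d b)
    (hF : ∀ m, d (F m) = ∑ i ∈ range m, (F i * P (m-1-i) - Q (m-1-i) * F i))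
    (hP : ∀ m, d (P m) = (∑ j ∈ range (m+1), G j * F (m-j))
        - (∑ j ∈ range m, P j * P (m-1-j)) - (if m = 0 then 1 else 0))
    (hQ : ∀ m, d (Q m) = (∑ j ∈ range (m+1), F j * G (m-j))
        - (∑ j ∈ range m, Q j * Q (m-1-j)) - (if m = 0 then 1 else 0))
    (m : ℕ) : d (d (F m)) = 0 := by
  have step : ∀ i ∈ range m, d (F i * P (m-1-i) - Q (m-1-i) * F i) =
      (∑ a ∈ range i, F a * (P (i-1-a) * P (m-1-i)))
    - (∑ a ∈ range i, Q (i-1-a) * (F a * P (m-1-i)))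
    + ((∑ a ∈ range (m-1-i+1), F i * (G a * F (m-1-i-a)))
      - (∑ a ∈ range (m-1-i), F i * (P a * P (m-1-i-1-a)))
      - F i * (if m-1-i = 0 then 1 else 0))
    - ((∑ a ∈ range (m-1-i+1), F a * (G (m-1-i-a) * F i))
      - (∑ a ∈ range (m-1-i), Q a * (Q (m-1-i-1-a) * F i))
      - (if m-1-i = 0 then 1 else 0) * F i)
    + ((∑ a ∈ range i, Q (m-1-i) * (F a * P (i-1-a)))
      - (∑ a ∈ range i, Q (m-1-i) * (Q (i-1-a) * F a))) := by
    intro i _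
    rw [map_sub, LF, LQ, hF i, hP (m-1-i), hQ (m-1-i)]
    simp only [Finset.sum_mul, Finset.mul_sum, sub_mul, mul_sub, mul_assoc,
      Finset.sum_sub_distrib]
    abel
  rw [hF m, map_sum, Finset.sum_congr rfl step]
  simp only [Finset.sum_add_distrib, Finset.sum_sub_distrib]
  rw [E1gen m (fun x y z => F x * (P y * P z)),
      E2gen m (fun x y z => F x * (G y * F z)),
      E3gen m (fun x y z => Q x * (Q y * F z)),
      E4gen m (fun x y z => Q x * (F y * P z)),
      show (∑ i ∈ range m, F i * (if m-1-i = 0 then (1:A) else 0))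
         = ∑ i ∈ range m, (if m-1-i = 0 then (1:A) else 0) * F i from
        Finset.sum_congr rfl (fun i _ => by split <;> simp)]
  abel

lemma d2_odd {A : Type*} [Ring A] (d : A →+ A) (F P G Q : ℕ → A)
    (hd1 : d 1 = 0)
    (LG : ∀ n b, d (G n * b) = d (G n) * b + G n * d b)
    (LP : ∀ n b, d (P n * b) = d (P n) * b - P n * d b)
    (hF : ∀ m, d (F m) = ∑ i ∈ range m, (F i * P (m-1-i) - Q (m-1-i) * F i))
    (hG : ∀ m, d (G m) = ∑ i ∈ range m, (G i * Q (m-1-i) - P (m-1-i) * G i))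
    (hP : ∀ m, d (P m) = (∑ j ∈ range (m+1), G j * F (m-j))
        - (∑ j ∈ range m, P j * P (m-1-j)) - (if m = 0 then 1 else 0))
    (m : ℕ) : d (d (P m)) = 0 := by
  have step1 : ∀ j ∈ range (m+1), d (G j * F (m-j)) =
      (∑ a ∈ range j, G a * (Q (j-1-a) * F (m-j)))
    - (∑ a ∈ range j, P (j-1-a) * (G a * F (m-j)))
    + ((∑ a ∈ range (m-j), G j * (F a * P (m-j-1-a)))
      - (∑ a ∈ range (m-j), G j * (Q (m-j-1-a) * F a))) := by
    intro j _
    rw [LG, hG j, hF (m-j)]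
    simp only [Finset.sum_mul, Finset.mul_sum, sub_mul, mul_sub, mul_assoc,
      Finset.sum_sub_distrib]
  have step2 : ∀ j ∈ range m, d (P j * P (m-1-j)) =
      ((∑ a ∈ range (j+1), G a * (F (j-a) * P (m-1-j)))
      - (∑ a ∈ range j, P a * (P (j-1-a) * P (m-1-j)))
      - (if j = 0 then 1 else 0) * P (m-1-j))
    - ((∑ a ∈ range (m-1-j+1), P j * (G a * F (m-1-j-a)))
      - (∑ a ∈ range (m-1-j), P j * (P a * P (m-1-j-1-a)))
      - P j * (if m-1-j = 0 then 1 else 0)) := by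
    intro j _
    rw [LP, hP j, hP (m-1-j)]
    simp only [Finset.sum_mul, Finset.mul_sum, sub_mul, mul_sub, mul_assoc,
      Finset.sum_sub_distrib]
  rw [hP m, map_sub, map_sub, map_sum, map_sum,
    show d (if m = 0 then (1:A) else 0) = 0 from by split <;> simp [hd1],
    Finset.sum_congr rfl step1, Finset.sum_congr rfl step2]
  simp only [Finset.sum_add_distrib, Finset.sum_sub_distrib]
  rw [O1gen m (fun x y z => G x * (Q y * F z)),
      O2gen m (fun x y z => P x * (G y * F z)),
      O3gen m (fun x y z => G x * (F y * P z)),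
      E1gen m (fun x y z => P x * (P y * P z)),
      dl1 m (fun j => P (m-1-j)), dl2 m P]
  simp only [Nat.sub_zero]
  abel

/-- In the free graded associative unital algebra on generators
`f_k, g_k` (`deg f_k = deg g_k = k`), the odd derivation `d` determined by
`d f_{2m} = Σ_{0≤i<m}(f_{2i} f_{2(m−i)−1} − g_{2(m−i)−1} f_{2i})`,
`d f_{2m+1} = Σ_{0≤j≤m} g_{2j} f_{2(m−j)} − Σ_{0≤j<m} f_{2j+1} f_{2(m−j)−1} − δ_{m,0}·1`,
and symmetrically for `g`, satisfies `d² = 0` on every generator.  The odd Leibniz rule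
`d(ab) = d(a)b + (−1)^{|a|} a d(b)` is recorded with each generator as the left factor. -/
theorem stmt_12 (A : Type*) [Ring A] (d : A →+ A) (f g : ℕ → A)
    (hd1 : d 1 = 0)
    (hLf : ∀ (n : ℕ) (b : A), d (f n * b) = d (f n) * b + ((-1 : ℤ) ^ n) • (f n * d b))
    (hLg : ∀ (n : ℕ) (b : A), d (g n * b) = d (g n) * b + ((-1 : ℤ) ^ n) • (g n * d b))
    (hdf_even : ∀ m : ℕ, d (f (2 * m)) =
      ∑ i ∈ Finset.range m,
        (f (2 * i) * f (2 * (m - i) - 1) - g (2 * (m - i) - 1) * f (2 * i)))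
    (hdf_odd : ∀ m : ℕ, d (f (2 * m + 1)) =
      (∑ j ∈ Finset.range (m + 1), g (2 * j) * f (2 * (m - j)))
        - (∑ j ∈ Finset.range m, f (2 * j + 1) * f (2 * (m - j) - 1))
        - (if m = 0 then 1 else 0))
    (hdg_even : ∀ m : ℕ, d (g (2 * m)) =
      ∑ i ∈ Finset.range m,
        (g (2 * i) * g (2 * (m - i) - 1) - f (2 * (m - i) - 1) * g (2 * i)))
    (hdg_odd : ∀ m : ℕ, d (g (2 * m + 1)) =
      (∑ j ∈ Finset.range (m + 1), f (2 * j) * g (2 * (m - j)))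
        - (∑ j ∈ Finset.range m, g (2 * j + 1) * g (2 * (m - j) - 1))
        - (if m = 0 then 1 else 0)) :
    ∀ n : ℕ, d (d (f n)) = 0 ∧ d (d (g n)) = 0 := by
  have LFf : ∀ (k : ℕ) (b : A), d (f (2*k) * b) = d (f (2*k)) * b + f (2*k) * d b := by
    intro k b; rw [hLf]; simp [pow_mul]
  have LPf : ∀ (k : ℕ) (b : A), d (f (2*k+1) * b) = d (f (2*k+1)) * b - f (2*k+1) * d b := by
    intro k b; rw [hLf]; simp [pow_succ, pow_mul, sub_eq_add_neg]
  have LGg : ∀ (k : ℕ) (b : A), d (g (2*k) * b) = d (g (2*k)) * b + g (2*k) * d b := by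
    intro k b; rw [hLg]; simp [pow_mul]
  have LQg : ∀ (k : ℕ) (b : A), d (g (2*k+1) * b) = d (g (2*k+1)) * b - g (2*k+1) * d b := by
    intro k b; rw [hLg]; simp [pow_succ, pow_mul, sub_eq_add_neg]
  have hFf : ∀ k, d (f (2*k)) =
      ∑ i ∈ range k, (f (2*i) * f (2*(k-1-i)+1) - g (2*(k-1-i)+1) * f (2*i)) := by
    intro k; rw [hdf_even]
    refine Finset.sum_congr rfl fun i hi => ?_
    simp only [Finset.mem_range] at hi
    rw [show 2*(k-i)-1 = 2*(k-1-i)+1 by omega]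
  have hGg : ∀ k, d (g (2*k)) =
      ∑ i ∈ range k, (g (2*i) * g (2*(k-1-i)+1) - f (2*(k-1-i)+1) * g (2*i)) := by
    intro k; rw [hdg_even]
    refine Finset.sum_congr rfl fun i hi => ?_
    simp only [Finset.mem_range] at hi
    rw [show 2*(k-i)-1 = 2*(k-1-i)+1 by omega]
  have hPf : ∀ k, d (f (2*k+1)) =
      (∑ j ∈ range (k+1), g (2*j) * f (2*(k-j)))
        - (∑ j ∈ range k, f (2*j+1) * f (2*(k-1-j)+1)) - (if k = 0 then 1 else 0) := by
    intro k; rw [hdf_odd]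
    congr 2
    refine Finset.sum_congr rfl fun j hj => ?_
    simp only [Finset.mem_range] at hj
    rw [show 2*(k-j)-1 = 2*(k-1-j)+1 by omega]
  have hQg : ∀ k, d (g (2*k+1)) =
      (∑ j ∈ range (k+1), f (2*j) * g (2*(k-j)))
        - (∑ j ∈ range k, g (2*j+1) * g (2*(k-1-j)+1)) - (if k = 0 then 1 else 0) := by
    intro k; rw [hdg_odd]
    congr 2
    refine Finset.sum_congr rfl fun j hj => ?_
    simp only [Finset.mem_range] at hj
    rw [show 2*(k-j)-1 = 2*(k-1-j)+1 by omega]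
  intro n
  rcases Nat.even_or_odd n with ⟨m, hm⟩ | ⟨m, hm⟩
  · obtain rfl : n = 2*m := by omega
    constructor
    · exact d2_even d (fun k => f (2*k)) (fun k => f (2*k+1)) (fun k => g (2*k))
        (fun k => g (2*k+1)) LFf LQg hFf hPf hQg m
    · exact d2_even d (fun k => g (2*k)) (fun k => g (2*k+1)) (fun k => f (2*k))
        (fun k => f (2*k+1)) LGg LPf hGg hQg hPf m
  · obtain rfl : n = 2*m+1 := by omega
    constructor
    · exact d2_odd d (fun k => f (2*k)) (fun k => f (2*k+1)) (fun k => g (2*k))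
        (fun k => g (2*k+1)) hd1 LGg LPf hFf hGg hPf m
    · exact d2_odd d (fun k => g (2*k)) (fun k => g (2*k+1)) (fun k => f (2*k))
        (fun k => f (2*k+1)) hd1 LFf LQg hGg hFf hQg m
end
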